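/- arXiv:2303.01188 — 3 statements merged into one kernel-verified Lean document; each statement's English description precedes it below -/
import Mathlib

section
/- The average fidelity of a channel with the identity over Haar-random pure input states equals (1 + d·F_ent)/(1 + d), where F_ent is the entanglement fidelity: E_{φ∼Haar}[⟨φ|N(|φ⟩⟨φ|)|φ⟩] = (1 + d·F(J_N,|Ψ⟩⟨Ψ|))/(1 + d). -/
open Matrix MeasureTheory BigOperators

noncomputable instance matMS {d : ℕ} : MeasurableSpace (Matrix (Fin d) (Fin d) ℂ) :=
  MeasurableSpace.pi

/-- The channel with Kraus operators `A`. -/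
noncomputable def krausMap {K d d' : ℕ} (A : Fin K → Matrix (Fin d') (Fin d) ℂ)
    (ρ : Matrix (Fin d) (Fin d) ℂ) : Matrix (Fin d') (Fin d') ℂ :=
  ∑ k, A k * ρ * (A k)ᴴ

/-- The first column `U|0⟩` of a unitary matrix, a Haar-random unit vector
when `U` is Haar-random. -/
noncomputable def col0 {d : ℕ} (hd : 0 < d) (U : Matrix.unitaryGroup (Fin d) ℂ) :
    Fin d → ℂ :=
  fun i => (U : Matrix (Fin d) (Fin d) ℂ) i ⟨0, hd⟩

/-!
Since `⟨φ|N(|φ⟩⟨φ|)|φ⟩ = ∑ₖ ⟨φ|Aₖ|φ⟩⟨φ|Aₖᴴ|φ⟩`, everything reduces to the fourth moments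
`E[φ̄ᵢ φⱼ φ̄ₗ φₘ]` of a random unit vector `φ` whose law is invariant under all unitaries.
Invariance under diagonal phases kills every moment unless `(i, l)` is a rearrangement of
`(j, m)`; invariance under permutations leaves two values `E|φₚ|⁴` and `E|φₚ|²|φ_q|²`;
invariance under the coordinate-mixing unitary `((1 + i)/2)·1 + ((1 - i)/2)·S`, with `S` a
transposition, forces `E|φₚ|⁴ = 2 E|φₚ|²|φ_q|²`. So the moments are `b (δᵢⱼ δₗₘ + δᵢₘ δⱼₗ)`,
and `|φ| = 1` gives `b = 1/(d(d+1))`. Hence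
`E[⟨φ|B|φ⟩⟨φ|C|φ⟩] = (Tr B Tr C + Tr BC)/(d(d+1))`, and `∑ₖ Tr(Aₖ Aₖᴴ) = d` gives the formula.
-/

section UnitaryMatrices

variable {n : Type*} [DecidableEq n]

theorem star_mulSingle_I_mul_self (p q : n) :
    star ((Pi.mulSingle p Complex.I : n → ℂ) q) * (Pi.mulSingle p Complex.I : n → ℂ) q = 1 := by
  by_cases hq : q = p <;> simp [hq]

noncomputable def sqrtSwap (p q : n) : Matrix n n ℂ :=
  ((1 + Complex.I) / 2) • 1 + ((1 - Complex.I) / 2) • (Equiv.swap p q).permMatrix ℂ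

theorem sqrtSwap_apply_left (p q i : n) :
    sqrtSwap p q p i = (if i = p then (1 + Complex.I) / 2 else 0) +
      (if i = q then (1 - Complex.I) / 2 else 0) := by
  simp [sqrtSwap, Matrix.one_apply, eq_comm]

variable [Fintype n]

theorem diagonal_mem_unitaryGroup {f : n → ℂ} (hf : ∀ q, star (f q) * f q = 1) :
    diagonal f ∈ unitaryGroup n ℂ := by
  rw [mem_unitaryGroup_iff', star_eq_conjTranspose, diagonal_conjTranspose, diagonal_mul_diagonal,
    ← diagonal_one]
  exact congrArg diagonal (funext hf)

theorem permMatrix_mem_unitaryGroup (σ : Equiv.Perm n) :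
    σ.permMatrix ℂ ∈ unitaryGroup n ℂ := by
  rw [mem_unitaryGroup_iff', star_eq_conjTranspose, conjTranspose_permMatrix, ← permMatrix_mul,
    mul_inv_cancel, permMatrix_one]

theorem sqrtSwap_mem_unitaryGroup (p q : n) : sqrtSwap p q ∈ unitaryGroup n ℂ := by
  have hS : (Equiv.swap p q).permMatrix ℂ * (Equiv.swap p q).permMatrix ℂ = 1 := by
    rw [← permMatrix_mul, Equiv.swap_mul_self, permMatrix_one]
  rw [mem_unitaryGroup_iff', star_eq_conjTranspose, sqrtSwap]
  simp only [conjTranspose_add, conjTranspose_smul, conjTranspose_one, conjTranspose_permMatrix,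
    Equiv.swap_inv, add_mul, mul_add, smul_mul_smul, Matrix.one_mul, Matrix.mul_one, hS]
  have h₁ : star ((1 + Complex.I) / 2) * ((1 + Complex.I) / 2) = 1 / 2 := by
    simp [Complex.ext_iff]; norm_num
  have h₂ : star ((1 - Complex.I) / 2) * ((1 - Complex.I) / 2) = 1 / 2 := by
    simp [Complex.ext_iff]; norm_num
  have h₃ : star ((1 - Complex.I) / 2) * ((1 + Complex.I) / 2)
      = -(star ((1 + Complex.I) / 2) * ((1 - Complex.I) / 2)) := by
    simp [Complex.ext_iff]; norm_num
  rw [h₁, h₂, h₃]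
  module

theorem conjTranspose_mul_single_mul_apply (W : Matrix n n ℂ) (p i j : n) :
    (Wᴴ * single p p (1 : ℂ) * W) i j = star (W p i) * W p j := by
  simp [Matrix.mul_apply, single_apply, ite_and]

theorem trace_conjTranspose_mul_mul {W : Matrix n n ℂ} (hW : W ∈ unitaryGroup n ℂ)
    (B : Matrix n n ℂ) : (Wᴴ * B * W).trace = B.trace := by
  rw [trace_mul_comm, ← Matrix.mul_assoc, ← star_eq_conjTranspose, mem_unitaryGroup_iff.mp hW,
    Matrix.one_mul]

theorem conjTranspose_mul_mul_mul_conjTranspose_mul_mul {W : Matrix n n ℂ}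
    (hW : W ∈ unitaryGroup n ℂ) (B C : Matrix n n ℂ) :
    Wᴴ * B * W * (Wᴴ * C * W) = Wᴴ * (B * C) * W := by
  rw [← star_eq_conjTranspose]
  simp only [Matrix.mul_assoc, ← Matrix.mul_assoc W, mem_unitaryGroup_iff.mp hW, Matrix.one_mul]

end UnitaryMatrices

section QuadraticForms

variable {n : Type*} [Fintype n]

theorem star_dotProduct_mulVec_eq_sum (B : Matrix n n ℂ) (v : n → ℂ) :
    star v ⬝ᵥ B *ᵥ v = ∑ p : n × n, star (v p.1) * B p.1 p.2 * v p.2 := by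
  simp [dotProduct, mulVec, Fintype.sum_prod_type, Finset.mul_sum, mul_assoc]

theorem quadForm_mul_quadForm_eq_sum (B C : Matrix n n ℂ) (v : n → ℂ) :
    (star v ⬝ᵥ B *ᵥ v) * (star v ⬝ᵥ C *ᵥ v)
      = ∑ x : (n × n) × (n × n), B x.1.1 x.1.2 * C x.2.1 x.2.2 *
          (star (v x.1.1) * v x.1.2 * star (v x.2.1) * v x.2.2) := by
  rw [star_dotProduct_mulVec_eq_sum, star_dotProduct_mulVec_eq_sum, Finset.sum_mul_sum,
    ← Finset.sum_product', Finset.univ_product_univ]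
  exact Finset.sum_congr rfl fun x _ => by ring

theorem star_dotProduct_conjTranspose_mul_mul_mulVec (W B : Matrix n n ℂ) (v : n → ℂ) :
    star v ⬝ᵥ (Wᴴ * B * W) *ᵥ v = star (W *ᵥ v) ⬝ᵥ B *ᵥ (W *ᵥ v) := by
  rw [star_mulVec, ← dotProduct_mulVec, mulVec_mulVec, mulVec_mulVec, Matrix.mul_assoc]

theorem norm_le_one_of_star_dotProduct_self_eq_one {v : n → ℂ} (hv : star v ⬝ᵥ v = 1) (i : n) :
    ‖v i‖ ≤ 1 := by
  have hsum : ∑ k, ‖v k‖ ^ 2 = 1 := by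
    exact_mod_cast (show (∑ k, ‖v k‖ ^ 2 : ℝ) = (1 : ℂ) by
      push_cast; rw [← hv]; simp [dotProduct, Complex.mul_conj', mul_comm])
  have : ‖v i‖ ^ 2 ≤ 1 :=
    hsum ▸ Finset.single_le_sum (f := fun k => ‖v k‖ ^ 2) (fun k _ => by positivity)
      (Finset.mem_univ i)
  nlinarith [norm_nonneg (v i)]

variable [DecidableEq n]

def pairingDelta (i j l m : n) : ℂ :=
  (if i = j ∧ l = m then 1 else 0) + (if i = m ∧ j = l then 1 else 0)

theorem sum_mul_pairingDelta (B C : Matrix n n ℂ) (b : ℂ) :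
    ∑ x : (n × n) × (n × n), B x.1.1 x.1.2 * C x.2.1 x.2.2 *
      (b * pairingDelta x.1.1 x.1.2 x.2.1 x.2.2)
      = b * (B.trace * C.trace + (B * C).trace) := by
  simp [pairingDelta, Fintype.sum_prod_type, mul_add, Finset.sum_add_distrib, ite_and,
    Finset.mul_sum, Matrix.trace, Matrix.mul_apply, mul_comm]
  exact Finset.sum_comm

theorem sum_mul_coincidence (B C : Matrix n n ℂ) (c : ℂ) :
    ∑ x : (n × n) × (n × n), B x.1.1 x.1.2 * C x.2.1 x.2.2 *
      (c * (if x.1.1 = x.1.2 ∧ x.1.2 = x.2.1 ∧ x.2.1 = x.2.2 then 1 else 0))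
      = c * ∑ i, B i i * C i i := by
  simp [Fintype.sum_prod_type, ite_and, Finset.mul_sum, mul_comm]

end QuadraticForms

section FourthMoments

variable {n : Type*} [Fintype n]

noncomputable def quarticMoment (ν : Measure (n → ℂ)) (i j l m : n) : ℂ :=
  ∫ v, star (v i) * v j * star (v l) * v m ∂ν

variable {ν : Measure (n → ℂ)}

theorem integrable_quartic [IsFiniteMeasure ν] (hsphere : ∀ᵐ v ∂ν, star v ⬝ᵥ v = 1)
    (i j l m : n) : Integrable (fun v : n → ℂ => star (v i) * v j * star (v l) * v m) ν := by
  refine .of_bound (by fun_prop) 1 (hsphere.mono fun v hv => ?_)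
  have h := norm_le_one_of_star_dotProduct_self_eq_one hv
  simp only [norm_mul, norm_star]
  exact mul_le_one₀ (mul_le_one₀ (mul_le_one₀ (h i) (by positivity) (h j)) (by positivity) (h l))
    (by positivity) (h m)

theorem integrable_quadForm_mul_quadForm [IsFiniteMeasure ν]
    (hsphere : ∀ᵐ v ∂ν, star v ⬝ᵥ v = 1) (B C : Matrix n n ℂ) :
    Integrable (fun v => (star v ⬝ᵥ B *ᵥ v) * (star v ⬝ᵥ C *ᵥ v)) ν := by
  simp_rw [quadForm_mul_quadForm_eq_sum]
  exact integrable_finsetSum _ fun x _ => (integrable_quartic hsphere _ _ _ _).const_mul _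

theorem integral_quadForm_mul_quadForm_eq_sum [IsFiniteMeasure ν]
    (hsphere : ∀ᵐ v ∂ν, star v ⬝ᵥ v = 1) (B C : Matrix n n ℂ) :
    ∫ v, (star v ⬝ᵥ B *ᵥ v) * (star v ⬝ᵥ C *ᵥ v) ∂ν
      = ∑ x : (n × n) × (n × n), B x.1.1 x.1.2 * C x.2.1 x.2.2 *
          quarticMoment ν x.1.1 x.1.2 x.2.1 x.2.2 := by
  simp_rw [quadForm_mul_quadForm_eq_sum]
  rw [integral_finsetSum _ fun x _ => (integrable_quartic hsphere _ _ _ _).const_mul _]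
  simp_rw [integral_const_mul, quarticMoment]

variable [DecidableEq n]

def IsUnitarilyInvariant (ν : Measure (n → ℂ)) : Prop :=
  ∀ V ∈ unitaryGroup n ℂ, ν.map (V *ᵥ ·) = ν

namespace IsUnitarilyInvariant

variable (hν : IsUnitarilyInvariant ν)
include hν

theorem integral_comp_mulVec {E : Type*} [NormedAddCommGroup E] [NormedSpace ℝ E]
    {V : Matrix n n ℂ} (hV : V ∈ unitaryGroup n ℂ) {f : (n → ℂ) → E}
    (hf : AEStronglyMeasurable f ν) : ∫ v, f (V *ᵥ v) ∂ν = ∫ v, f v ∂ν := by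
  rw [← integral_map (by fun_prop) (by rwa [hν V hV]), hν V hV]

theorem integral_quadForm_conj {W : Matrix n n ℂ} (hW : W ∈ unitaryGroup n ℂ)
    (B C : Matrix n n ℂ) :
    ∫ v, (star v ⬝ᵥ (Wᴴ * B * W) *ᵥ v) * (star v ⬝ᵥ (Wᴴ * C * W) *ᵥ v) ∂ν
      = ∫ v, (star v ⬝ᵥ B *ᵥ v) * (star v ⬝ᵥ C *ᵥ v) ∂ν := by
  simp_rw [star_dotProduct_conjTranspose_mul_mul_mulVec]
  exact hν.integral_comp_mulVec hW (f := fun v => (star v ⬝ᵥ B *ᵥ v) * (star v ⬝ᵥ C *ᵥ v))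
    (by fun_prop)

theorem quarticMoment_eq_phase_mul {f : n → ℂ} (hf : ∀ q, star (f q) * f q = 1) (i j l m : n) :
    quarticMoment ν i j l m = star (f i) * f j * star (f l) * f m * quarticMoment ν i j l m := by
  conv_lhs => rw [quarticMoment, ← hν.integral_comp_mulVec (diagonal_mem_unitaryGroup hf)
    (by fun_prop)]
  rw [quarticMoment, ← integral_const_mul]
  simp only [mulVec_diagonal, star_mul]
  congr 1; ext v; ring

theorem quarticMoment_eq_zero_of_phase {f : n → ℂ} (hf : ∀ q, star (f q) * f q = 1)
    {i j l m : n} (hphase : star (f i) * f j * star (f l) * f m ≠ 1) :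
    quarticMoment ν i j l m = 0 := by
  have h := hν.quarticMoment_eq_phase_mul hf i j l m
  refine (mul_eq_zero.mp ?_).resolve_left (sub_ne_zero.mpr hphase.symm)
  linear_combination h

theorem quarticMoment_eq_zero {i j l m : n} (h₁ : ¬(i = j ∧ l = m)) (h₂ : ¬(i = m ∧ j = l)) :
    quarticMoment ν i j l m = 0 := by
  -- Put the phase `i` on a coordinate that occurs a different number of times among `i, l`
  -- than among `j, m`.
  by_cases hij : i = j
  · subst hij
    refine hν.quarticMoment_eq_zero_of_phase (star_mulSingle_I_mul_self m) ?_
    have hlm : l ≠ m := fun h => h₁ ⟨rfl, h⟩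
    simp [Pi.mulSingle_apply, hlm]
    split_ifs <;> norm_num [Complex.ext_iff]
  by_cases him : i = m
  · subst him
    refine hν.quarticMoment_eq_zero_of_phase (star_mulSingle_I_mul_self j) ?_
    have hjl : l ≠ j := fun h => h₂ ⟨rfl, h.symm⟩
    simp [hjl, Ne.symm hij, Complex.ext_iff]
  · refine hν.quarticMoment_eq_zero_of_phase (star_mulSingle_I_mul_self i) ?_
    simp [Pi.mulSingle_apply, Ne.symm hij, Ne.symm him]
    split_ifs <;> norm_num [Complex.ext_iff]

theorem quarticMoment_perm (σ : Equiv.Perm n) (i j l m : n) :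
    quarticMoment ν (σ i) (σ j) (σ l) (σ m) = quarticMoment ν i j l m := by
  rw [quarticMoment, ← hν.integral_comp_mulVec (permMatrix_mem_unitaryGroup σ.symm) (by fun_prop)]
  simp [permMatrix_mulVec, quarticMoment]

theorem quarticMoment_pair_eq {p q i l : n} (hpq : p ≠ q) (hil : i ≠ l) :
    quarticMoment ν i i l l = quarticMoment ν p p q q := by
  obtain ⟨σ, hp, hq⟩ :=
    MulAction.is_two_pretransitive_iff.mp (Equiv.Perm.isMultiplyPretransitive n 2) hpq hil
  rw [← hp, ← hq]
  exact hν.quarticMoment_perm σ p p q q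

theorem exists_quarticMoment_eq_pairingDelta_add_coincidence [Nontrivial n] :
    ∃ b c : ℂ, ∀ i j l m : n, quarticMoment ν i j l m =
      b * pairingDelta i j l m + c * (if i = j ∧ j = l ∧ l = m then 1 else 0) := by
  obtain ⟨p, q, hpq⟩ := exists_pair_ne n
  refine ⟨quarticMoment ν p p q q, quarticMoment ν p p p p - 2 * quarticMoment ν p p q q,
    fun i j l m => ?_⟩
  by_cases h₁ : i = j ∧ l = m
  · obtain ⟨rfl, rfl⟩ := h₁
    by_cases hil : i = l
    · subst hil
      have h := hν.quarticMoment_perm (Equiv.swap p i) p p p p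
      rw [Equiv.swap_apply_left] at h
      simp [h, pairingDelta]; ring
    · simp [hν.quarticMoment_pair_eq hpq hil, hil, pairingDelta]
  by_cases h₂ : i = m ∧ j = l
  · obtain ⟨rfl, rfl⟩ := h₂
    have hij : i ≠ j := fun h => h₁ ⟨h, h.symm⟩
    have hswap : quarticMoment ν i j j i = quarticMoment ν i i j j := by
      simp only [quarticMoment]; congr 1; ext v; ring
    simp [hswap, hν.quarticMoment_pair_eq hpq hij, hij, pairingDelta]
  · have h₃ : ¬(i = j ∧ j = l ∧ l = m) := fun ⟨hij, _, hlm⟩ => h₁ ⟨hij, hlm⟩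
    simp [hν.quarticMoment_eq_zero h₁ h₂, h₁, h₂, h₃, pairingDelta]

theorem eq_zero_of_quarticMoment_eq_pairingDelta_add [IsFiniteMeasure ν]
    (hsphere : ∀ᵐ v ∂ν, star v ⬝ᵥ v = 1) {b c : ℂ}
    (hM : ∀ i j l m : n, quarticMoment ν i j l m =
      b * pairingDelta i j l m + c * (if i = j ∧ j = l ∧ l = m then 1 else 0))
    {p q : n} (hpq : p ≠ q) : c = 0 := by
  -- Compare `E|φₚ|⁴` with `E|(Wφ)ₚ|⁴`, `W = sqrtSwap p q`: only the `c`-term sees that the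
  -- row `Wₚ` has `∑ᵢ |Wₚᵢ|⁴ = 1/2` instead of `1`.
  have hW := sqrtSwap_mem_unitaryGroup p q
  have key := hν.integral_quadForm_conj hW (single p p 1) (single p p 1)
  simp only [integral_quadForm_mul_quadForm_eq_sum hsphere, hM, mul_add, Finset.sum_add_distrib,
    sum_mul_pairingDelta, sum_mul_coincidence] at key
  simp only [conjTranspose_mul_mul_mul_conjTranspose_mul_mul hW, trace_conjTranspose_mul_mul hW,
    conjTranspose_mul_single_mul_apply, sqrtSwap_apply_left] at key
  rw [Fintype.sum_eq_add p q hpq (fun x hx => by simp [hx.1, hx.2])] at key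
  simp [single_apply, hpq, Ne.symm hpq] at key
  have hα : (1 + -Complex.I) / 2 * ((1 + Complex.I) / 2) = 1 / 2 := by
    ring_nf; rw [Complex.I_sq]; norm_num
  have hβ : (1 + Complex.I) / 2 * ((1 - Complex.I) / 2) = 1 / 2 := by
    ring_nf; rw [Complex.I_sq]; norm_num
  rw [hα, hβ] at key
  linear_combination -2 * key

theorem exists_quarticMoment_eq_pairingDelta [IsProbabilityMeasure ν]
    (hsphere : ∀ᵐ v ∂ν, star v ⬝ᵥ v = 1) :
    ∃ b : ℂ, ∀ i j l m : n, quarticMoment ν i j l m = b * pairingDelta i j l m := by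
  rcases subsingleton_or_nontrivial n with hn | hn
  -- No unitary mixes coordinates in dimension one, but there `E|φ|⁴ = 1` directly.
  · refine ⟨1 / 2, fun i j l m => ?_⟩
    rw [Subsingleton.elim j i, Subsingleton.elim l i, Subsingleton.elim m i]
    calc quarticMoment ν i i i i = ∫ v, (star v ⬝ᵥ v) ^ 2 ∂ν := by
          simp only [quarticMoment, dotProduct, Fintype.sum_subsingleton _ i, Pi.star_apply]
          ring_nf
      _ = ∫ _, 1 ∂ν := integral_congr_ae (hsphere.mono fun v hv => by simp [hv])
      _ = _ := by norm_num [pairingDelta]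
  · obtain ⟨b, c, hM⟩ := hν.exists_quarticMoment_eq_pairingDelta_add_coincidence
    obtain ⟨p, q, hpq⟩ := exists_pair_ne n
    refine ⟨b, fun i j l m => ?_⟩
    simp [hM, hν.eq_zero_of_quarticMoment_eq_pairingDelta_add hsphere hM hpq]

theorem integral_quadForm_mul_quadForm [IsProbabilityMeasure ν]
    (hsphere : ∀ᵐ v ∂ν, star v ⬝ᵥ v = 1) (B C : Matrix n n ℂ) :
    ∫ v, (star v ⬝ᵥ B *ᵥ v) * (star v ⬝ᵥ C *ᵥ v) ∂ν
      = (B.trace * C.trace + (B * C).trace) / (Fintype.card n * (Fintype.card n + 1)) := by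
  obtain ⟨b, hM⟩ := hν.exists_quarticMoment_eq_pairingDelta hsphere
  have hnorm : ∫ v, (star v ⬝ᵥ (1 : Matrix n n ℂ) *ᵥ v) * (star v ⬝ᵥ (1 : Matrix n n ℂ) *ᵥ v) ∂ν
      = 1 := by
    rw [integral_congr_ae (g := fun _ => 1) (hsphere.mono fun v hv => by simp [hv])]
    simp
  simp only [integral_quadForm_mul_quadForm_eq_sum hsphere, hM, sum_mul_pairingDelta]
    at hnorm ⊢
  simp only [trace_one, Matrix.mul_one] at hnorm
  have hb : b * (Fintype.card n * (Fintype.card n + 1)) = 1 := by linear_combination hnorm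
  rw [eq_div_iff (right_ne_zero_of_mul_eq_one hb)]
  linear_combination (B.trace * C.trace + (B * C).trace) * hb

end IsUnitarilyInvariant

end FourthMoments

section KrausMap

variable {K d : ℕ} (A : Fin K → Matrix (Fin d) (Fin d) ℂ)

theorem star_dotProduct_krausMap_mulVec (v : Fin d → ℂ) :
    star v ⬝ᵥ krausMap A (vecMulVec v (star v)) *ᵥ v
      = ∑ k, (star v ⬝ᵥ A k *ᵥ v) * (star v ⬝ᵥ (A k)ᴴ *ᵥ v) := by
  simp only [krausMap, sum_mulVec, dotProduct_sum, ← mulVec_mulVec, vecMulVec_mulVec]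
  refine Finset.sum_congr rfl fun k _ => ?_
  simp [mulVec_smul, dotProduct_smul, mul_comm]

theorem sum_trace_mul_trace_conjTranspose_add (hA : ∑ k, (A k)ᴴ * A k = 1) :
    ∑ k, ((A k).trace * (A k)ᴴ.trace + (A k * (A k)ᴴ).trace)
      = ((∑ k, ‖(A k).trace‖ ^ 2 + d : ℝ) : ℂ) := by
  simp only [Finset.sum_add_distrib, trace_conjTranspose, RCLike.star_def, Complex.mul_conj,
    trace_mul_comm (A _), ← trace_sum, hA, trace_one, Fintype.card_fin, Complex.normSq_eq_norm_sq]
  push_cast; rfl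

variable {ν : Measure (Fin d → ℂ)} (hsphere : ∀ᵐ v ∂ν, star v ⬝ᵥ v = 1)
include hsphere

theorem integrable_star_dotProduct_krausMap_mulVec [IsFiniteMeasure ν] :
    Integrable (fun v => star v ⬝ᵥ krausMap A (vecMulVec v (star v)) *ᵥ v) ν := by
  simp_rw [star_dotProduct_krausMap_mulVec]
  exact integrable_finsetSum _ fun k _ => integrable_quadForm_mul_quadForm hsphere _ _

theorem IsUnitarilyInvariant.integral_star_dotProduct_krausMap_mulVec [IsProbabilityMeasure ν]
    (hν : IsUnitarilyInvariant ν) (hA : ∑ k, (A k)ᴴ * A k = 1) :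
    ∫ v, star v ⬝ᵥ krausMap A (vecMulVec v (star v)) *ᵥ v ∂ν
      = ((∑ k, ‖(A k).trace‖ ^ 2 + d : ℝ) : ℂ) / (d * (d + 1)) := by
  simp_rw [star_dotProduct_krausMap_mulVec]
  rw [integral_finsetSum _ fun k _ => integrable_quadForm_mul_quadForm hsphere _ _]
  simp only [hν.integral_quadForm_mul_quadForm hsphere, ← Finset.sum_div,
    sum_trace_mul_trace_conjTranspose_add A hA, Fintype.card_fin]

end KrausMap

section FirstColumn

variable {d : ℕ}

theorem measurable_const_mul_unitaryGroup (V : unitaryGroup (Fin d) ℂ) :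
    Measurable (fun U : unitaryGroup (Fin d) ℂ => V * U) := by
  have : BorelSpace (Matrix (Fin d) (Fin d) ℂ) := Pi.borelSpace
  exact (continuous_const.mul continuous_subtype_val).measurable.subtype_mk

variable (hd : 0 < d)

theorem measurable_col0 : Measurable (col0 hd) :=
  measurable_pi_lambda _ fun i =>
    (measurable_pi_apply _).comp ((measurable_pi_apply i).comp measurable_subtype_coe)

theorem col0_mul (V U : unitaryGroup (Fin d) ℂ) :
    col0 hd (V * U) = (V : Matrix (Fin d) (Fin d) ℂ) *ᵥ col0 hd U := by
  ext i; simp [col0, mulVec, dotProduct, Matrix.mul_apply]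

theorem star_col0_dotProduct_col0 (U : unitaryGroup (Fin d) ℂ) :
    star (col0 hd U) ⬝ᵥ col0 hd U = 1 := by
  have h := congrFun (congrFun (UnitaryGroup.star_mul_self U) ⟨0, hd⟩) ⟨0, hd⟩
  simpa [Matrix.mul_apply, dotProduct, col0] using h

theorem isUnitarilyInvariant_map_col0 {μ : Measure (unitaryGroup (Fin d) ℂ)}
    (hinv : ∀ V : unitaryGroup (Fin d) ℂ, μ.map (fun U => V * U) = μ) :
    IsUnitarilyInvariant (μ.map (col0 hd)) := by
  intro V hV
  have hcomp : (V *ᵥ ·) ∘ col0 hd = col0 hd ∘ (fun U => ⟨V, hV⟩ * U) :=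
    funext fun U => (col0_mul hd ⟨V, hV⟩ U).symm
  rw [Measure.map_map (by fun_prop) (measurable_col0 hd), hcomp,
    ← Measure.map_map (measurable_col0 hd) (measurable_const_mul_unitaryGroup _), hinv]

theorem ae_star_dotProduct_self_map_col0 (μ : Measure (unitaryGroup (Fin d) ℂ)) :
    ∀ᵐ v ∂μ.map (col0 hd), star v ⬝ᵥ v = 1 :=
  (ae_map_iff (measurable_col0 hd).aemeasurable
    (isClosed_eq (by fun_prop) continuous_const).measurableSet).mpr
    (ae_of_all _ (star_col0_dotProduct_col0 hd))

end FirstColumn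

/-- The average fidelity over Haar-random pure input states equals
`(1 + d·F_ent)/(1 + d)`, where `F_ent = (1/d²) ∑ₖ |Tr Aₖ|²` is the
entanglement fidelity:
`E_{φ∼Haar}[⟨φ|N(|φ⟩⟨φ|)|φ⟩] = (1 + d·F(J_N,|Ψ⟩⟨Ψ|))/(1 + d)`. -/
theorem stmt3 {d K : ℕ} (hd : 0 < d) (A : Fin K → Matrix (Fin d) (Fin d) ℂ)
    (hA : ∑ k, (A k)ᴴ * A k = 1)
    (μ : Measure (Matrix.unitaryGroup (Fin d) ℂ)) [IsProbabilityMeasure μ]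
    (hinv : ∀ V : Matrix.unitaryGroup (Fin d) ℂ, μ.map (fun U => V * U) = μ) :
    (∫ U, (star (col0 hd U) ⬝ᵥ
        (krausMap A (Matrix.vecMulVec (col0 hd U) (star (col0 hd U)))).mulVec
          (col0 hd U)).re ∂μ)
      = (1 + (d : ℝ) * ((1 / (d : ℝ) ^ 2) * ∑ k, ‖(A k).trace‖ ^ 2))
          / (1 + (d : ℝ)) := by
  set ν := μ.map (col0 hd)
  have : IsProbabilityMeasure ν :=
    Measure.isProbabilityMeasure_map (measurable_col0 hd).aemeasurable
  have hν : IsUnitarilyInvariant ν := isUnitarilyInvariant_map_col0 hd hinv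
  have hsphere := ae_star_dotProduct_self_map_col0 hd μ
  have hint := integrable_star_dotProduct_krausMap_mulVec A hsphere
  calc _ = ∫ v, (star v ⬝ᵥ krausMap A (vecMulVec v (star v)) *ᵥ v).re ∂ν :=
        (integral_map (measurable_col0 hd).aemeasurable hint.re.aestronglyMeasurable).symm
    _ = (∫ v, star v ⬝ᵥ krausMap A (vecMulVec v (star v)) *ᵥ v ∂ν).re := by
        simpa using integral_re hint
    _ = (((∑ k, ‖(A k).trace‖ ^ 2 + d) / (d * (d + 1)) : ℝ) : ℂ).re := by
        rw [hν.integral_star_dotProduct_krausMap_mulVec A hsphere hA]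
        push_cast; rfl
    _ = _ := by
        rw [Complex.ofReal_re]
        field_simp
        ring
end

section
/- For a POVM {λ_i |φ_i⟩⟨φ_i|} on C^{d_anc}⊗C^{d_out} with |φ_i⟩ = (B_i ⊗ I)|Ψ_{d_out}⟩ and Tr(B_i B_i†) = d_out: for every X ∈ C^{d_anc×d_anc} one has Σ_i λ_i B_i† X B_i = d_out·Tr(X)·I_{d_out}, and in particular Σ_i λ_i B_i B_i† = d_out²·I_{d_anc}. -/
open Matrix BigOperators

/-- The vector `|φᵢ⟩ = (Bᵢ ⊗ I)|Ψ_{d_out}⟩`, with components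
`(1/√d_out)·(Bᵢ)_{a,b}`. -/
noncomputable def povmVec {danc dout : ℕ} (B : Matrix (Fin danc) (Fin dout) ℂ) :
    Fin danc × Fin dout → ℂ :=
  fun p => ((Real.sqrt dout : ℝ) : ℂ)⁻¹ * B p.1 p.2

/-!
Undoing the normalisation `1/√d_out` of `|φᵢ⟩`, the POVM condition says
`∑ᵢ λᵢ (Bᵢ)_{ab} conj (Bᵢ)_{a'b'} = d_out δ_{aa'} δ_{bb'}`. Both identities are contractions of
this one: with `X_{aa'}` over `a, a'` for the first, and over `b = b'` (a partial trace) for the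
second.
-/
namespace Matrix

variable {R ι m n : Type*} [CommRing R] [StarRing R] [Fintype ι] [DecidableEq m] [DecidableEq n]
  {w : ι → R} {B : ι → Matrix m n R} {c : R}

theorem sum_mul_mul_star_eq_of_sum_smul_vecMulVec
    (h : ∑ i, w i • vecMulVec (Function.uncurry (B i)) (star (Function.uncurry (B i))) = c • 1)
    (a a' : m) (b b' : n) :
    ∑ i, w i * (B i a b * star (B i a' b')) = if a = a' ∧ b = b' then c else 0 := by
  have := congrFun (congrFun h (a, b)) (a', b')
  simpa [Matrix.sum_apply, vecMulVec_apply, one_apply, Prod.ext_iff, Function.uncurry] using this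

theorem sum_smul_conjTranspose_mul_mul_eq_of_sum_smul_vecMulVec [Fintype m] [Fintype n]
    (h : ∑ i, w i • vecMulVec (Function.uncurry (B i)) (star (Function.uncurry (B i))) = c • 1)
    (X : Matrix m m R) :
    ∑ i, w i • ((B i)ᴴ * X * B i) = (c * X.trace) • 1 := by
  ext b b'
  calc (∑ i, w i • ((B i)ᴴ * X * B i)) b b'
      = ∑ a', ∑ a, X a a' * ∑ i, w i * (B i a' b' * star (B i a b)) := by
        simp only [Matrix.sum_apply, smul_apply, mul_apply, conjTranspose_apply, smul_eq_mul,
          Finset.mul_sum, Finset.sum_mul]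
        rw [Finset.sum_comm]
        refine Finset.sum_congr rfl fun a' _ => ?_
        rw [Finset.sum_comm]
        refine Finset.sum_congr rfl fun a _ => Finset.sum_congr rfl fun i _ => ?_
        ring
    _ = ((c * X.trace) • (1 : Matrix n n R)) b b' := by
        simp only [sum_mul_mul_star_eq_of_sum_smul_vecMulVec h]
        by_cases hb : b = b' <;> simp [hb, trace, Finset.mul_sum, mul_comm, eq_comm]

theorem sum_smul_mul_conjTranspose_eq_of_sum_smul_vecMulVec [Fintype m] [Fintype n]
    (h : ∑ i, w i • vecMulVec (Function.uncurry (B i)) (star (Function.uncurry (B i))) = c • 1) :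
    ∑ i, w i • (B i * (B i)ᴴ) = (c * Fintype.card n) • 1 := by
  ext a a'
  calc (∑ i, w i • (B i * (B i)ᴴ)) a a'
      = ∑ b, ∑ i, w i * (B i a b * star (B i a' b)) := by
        simp only [Matrix.sum_apply, smul_apply, mul_apply, conjTranspose_apply, smul_eq_mul,
          Finset.mul_sum]
        exact Finset.sum_comm
    _ = ((c * Fintype.card n) • (1 : Matrix m m R)) a a' := by
        simp only [sum_mul_mul_star_eq_of_sum_smul_vecMulVec h]
        by_cases ha : a = a' <;> simp [ha, mul_comm]

end Matrix

theorem sum_smul_vecMulVec_uncurry_eq_of_povmVec {danc dout : ℕ} {ι : Type*} [Fintype ι]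
    {lam : ι → ℝ} {B : ι → Matrix (Fin danc) (Fin dout) ℂ}
    (hPOVM : ∑ i, ((lam i : ℝ) : ℂ) •
        Matrix.vecMulVec (povmVec (B i)) (star (povmVec (B i))) = 1) :
    ∑ i, ((lam i : ℝ) : ℂ) • vecMulVec (Function.uncurry (B i)) (star (Function.uncurry (B i)))
      = (dout : ℂ) • 1 := by
  rcases Nat.eq_zero_or_pos dout with rfl | hpos
  · ext ⟨_, b⟩
    exact b.elim0
  have hvec : ∀ i, vecMulVec (povmVec (B i)) (star (povmVec (B i)))
      = (dout : ℂ)⁻¹ • vecMulVec (Function.uncurry (B i)) (star (Function.uncurry (B i))) := by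
    intro i
    have hs : povmVec (B i) = ((Real.sqrt dout : ℝ) : ℂ)⁻¹ • Function.uncurry (B i) := rfl
    have hsq : (((Real.sqrt dout : ℝ) : ℂ)⁻¹ * ((Real.sqrt dout : ℝ) : ℂ)⁻¹) = (dout : ℂ)⁻¹ := by
      rw [← mul_inv, ← Complex.ofReal_mul, Real.mul_self_sqrt (Nat.cast_nonneg _)]
      push_cast
      rfl
    rw [hs, star_smul, smul_vecMulVec, vecMulVec_smul, smul_smul, star_inv₀, Complex.star_def,
      Complex.conj_ofReal, hsq]
  simp only [hvec, smul_comm _ ((dout : ℂ)⁻¹), ← Finset.smul_sum] at hPOVM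
  rw [← hPOVM, smul_smul, mul_inv_cancel₀ (by exact_mod_cast hpos.ne'), one_smul]

theorem stmt15_general {danc dout : ℕ} {ι : Type*} [Fintype ι]
    (lam : ι → ℝ)
    (B : ι → Matrix (Fin danc) (Fin dout) ℂ)
    (hPOVM : ∑ i, ((lam i : ℝ) : ℂ) •
        Matrix.vecMulVec (povmVec (B i)) (star (povmVec (B i))) = 1) :
    (∀ X : Matrix (Fin danc) (Fin danc) ℂ,
        ∑ i, ((lam i : ℝ) : ℂ) • ((B i)ᴴ * X * B i)
          = ((dout : ℂ) * X.trace) • (1 : Matrix (Fin dout) (Fin dout) ℂ))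
    ∧ (∑ i, ((lam i : ℝ) : ℂ) • (B i * (B i)ᴴ)
          = ((dout : ℂ) ^ 2) • (1 : Matrix (Fin danc) (Fin danc) ℂ)) := by
  have h := sum_smul_vecMulVec_uncurry_eq_of_povmVec hPOVM
  refine ⟨sum_smul_conjTranspose_mul_mul_eq_of_sum_smul_vecMulVec h, ?_⟩
  rw [sum_smul_mul_conjTranspose_eq_of_sum_smul_vecMulVec h, Fintype.card_fin, sq]

/-- For a POVM `{λᵢ|φᵢ⟩⟨φᵢ|}` with `|φᵢ⟩ = (Bᵢ⊗I)|Ψ_{d_out}⟩` and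
`Tr(BᵢBᵢᴴ) = d_out`: for every `X`, `∑ᵢ λᵢ Bᵢᴴ X Bᵢ = d_out·Tr(X)·I`, and
in particular `∑ᵢ λᵢ Bᵢ Bᵢᴴ = d_out²·I`. -/
theorem stmt15 {danc dout : ℕ} {ι : Type*} [Fintype ι]
    (lam : ι → ℝ) (hlam : ∀ i, 0 < lam i)
    (B : ι → Matrix (Fin danc) (Fin dout) ℂ)
    (hB : ∀ i, (B i * (B i)ᴴ).trace = (dout : ℂ))
    (hPOVM : ∑ i, ((lam i : ℝ) : ℂ) •
        Matrix.vecMulVec (povmVec (B i)) (star (povmVec (B i))) = 1) :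
    (∀ X : Matrix (Fin danc) (Fin danc) ℂ,
        ∑ i, ((lam i : ℝ) : ℂ) • ((B i)ᴴ * X * B i)
          = ((dout : ℂ) * X.trace) • (1 : Matrix (Fin dout) (Fin dout) ℂ))
    ∧ (∑ i, ((lam i : ℝ) : ℂ) • (B i * (B i)ᴴ)
          = ((dout : ℂ) ^ 2) • (1 : Matrix (Fin danc) (Fin danc) ℂ)) :=
  stmt15_general lam B hPOVM
end

section
/- Trace bound for permuted products: for any d×d matrices A and B and any permutation α ∈ S₈, |Tr_α(A,A†,A,A†,B,B†,B,B†)|^{1/2} ≤ max{|Tr A|⁴, Tr(AA†)²}^{1/2}·max{|Tr B|⁴, Tr(BB†)²}^{1/2}, where a representative special case is Tr(ABABA†B†A†B†) ≤ Tr(BB†)²·Tr(AA†)². -/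
open Matrix BigOperators

/-- `Tr_α(M₁,…,Mₙ) = ∏_{cycles C of α} Tr(∏_{k∈C} M_k)`, written via the
standard permutation-sum formula. -/
noncomputable def trPerm {n d : ℕ} (α : Equiv.Perm (Fin n))
    (M : Fin n → Matrix (Fin d) (Fin d) ℂ) : ℂ :=
  ∑ i : Fin n → Fin d, ∏ k, M k (i k) (i (α k))

attribute [local instance] Matrix.frobeniusSeminormedAddCommGroup Matrix.frobeniusNormedRing

noncomputable def trP {d : ℕ} (ι : Type) [Fintype ι] [DecidableEq ι] (α : Equiv.Perm ι)
    (M : ι → Matrix (Fin d) (Fin d) ℂ) : ℂ :=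
  ∑ i : ι → Fin d, ∏ k, M k (i k) (i (α k))

lemma trP_one {d : ℕ} (ι : Type) [Fintype ι] [DecidableEq ι]
    (M : ι → Matrix (Fin d) (Fin d) ℂ) : trP ι 1 M = ∏ k, (M k).trace := by
  unfold trP
  have h : ∀ k, (M k).trace = ∑ v : Fin d, M k v v := fun k => rfl
  simp only [h, Equiv.Perm.one_apply]
  rw [Finset.prod_univ_sum]
  simp [Fintype.piFinset_univ]

lemma frob_sq {d : ℕ} (X : Matrix (Fin d) (Fin d) ℂ) :
    ‖X‖ ^ 2 = ∑ i, ∑ j, ‖X i j‖ ^ 2 := by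
  rw [Matrix.frobenius_norm_def, ← Real.rpow_natCast _ 2, ← Real.rpow_mul (by positivity)]
  norm_num

lemma trace_mul_conjTranspose_re {d : ℕ} (X : Matrix (Fin d) (Fin d) ℂ) :
    ((X * Xᴴ).trace).re = ‖X‖ ^ 2 := by
  rw [frob_sq]
  simp only [Matrix.trace, Matrix.diag, Matrix.mul_apply, Matrix.conjTranspose_apply]
  rw [Complex.re_sum]
  congr 1; ext i
  rw [Complex.re_sum]
  congr 1; ext j
  rw [show (star (X i j)) = (starRingEnd ℂ) (X i j) from rfl, Complex.mul_conj, Complex.sq_norm]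
  simp

lemma abs_trace_mul_le {d : ℕ} (X Y : Matrix (Fin d) (Fin d) ℂ) :
    ‖(X * Y).trace‖ ≤ ‖X‖ * ‖Y‖ := by
  have h1 : (X * Y).trace = ∑ p : Fin d × Fin d, X p.1 p.2 * Y p.2 p.1 := by
    rw [Fintype.sum_prod_type]; rfl
  have h2 : ‖(X * Y).trace‖ ≤ ∑ p : Fin d × Fin d,
      ‖X p.1 p.2‖ * ‖Y p.2 p.1‖ := by
    rw [h1]
    exact (norm_sum_le _ _).trans_eq (by simp [norm_mul])
  refine h2.trans ?_
  set S := ∑ p : Fin d × Fin d, ‖X p.1 p.2‖ * ‖Y p.2 p.1‖ with hS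
  have hXsq : (∑ p : Fin d × Fin d, ‖X p.1 p.2‖ ^ 2) = ‖X‖ ^ 2 := by
    rw [frob_sq, Fintype.sum_prod_type]
  have hYsq : (∑ p : Fin d × Fin d, ‖Y p.2 p.1‖ ^ 2) = ‖Y‖ ^ 2 := by
    rw [frob_sq, Fintype.sum_prod_type]
    exact Finset.sum_comm
  have cs := Finset.sum_mul_sq_le_sq_mul_sq Finset.univ
    (fun p : Fin d × Fin d => ‖X p.1 p.2‖)
    (fun p : Fin d × Fin d => ‖Y p.2 p.1‖)
  rw [hXsq, hYsq, ← hS] at cs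
  have hnn : (0:ℝ) ≤ ‖X‖ * ‖Y‖ := by positivity
  nlinarith [abs_nonneg S, sq_abs S, le_abs_self S]

def contractPerm {ι : Type} [DecidableEq ι] (α : Equiv.Perm ι) (k₀ : ι) :
    Equiv.Perm {k : ι // k ≠ α k₀} :=
  (α * Equiv.swap k₀ (α k₀)).subtypePerm (fun x => by
    have : (α * Equiv.swap k₀ (α k₀)) x = α k₀ ↔ x = α k₀ := by
      rw [Equiv.Perm.mul_apply, α.apply_eq_iff_eq (y := k₀), Equiv.swap_apply_eq_iff,
        Equiv.swap_apply_left]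
    exact not_congr this)

lemma trP_contract {d : ℕ} {ι : Type} [Fintype ι] [DecidableEq ι] (α : Equiv.Perm ι)
    (M : ι → Matrix (Fin d) (Fin d) ℂ) (k₀ : ι) (h : α k₀ ≠ k₀) :
    trP ι α M = trP {k : ι // k ≠ α k₀} (contractPerm α k₀)
      (fun k => if (k : ι) = k₀ then M k₀ * M (α k₀) else M k) := by
  classical
  set k₁ := α k₀ with hk₁
  have hk01 : k₀ ≠ k₁ := Ne.symm h
  have hαk₁ : α k₁ ≠ k₁ := by
    intro hc
    exact hk01 (α.injective (hc.symm ▸ hk₁.symm)).symm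
  set ι' := {k : ι // k ≠ k₁}
  set b₀ : ι' := ⟨k₀, hk01⟩ with hb₀
  set a₁ : ι' := ⟨α k₁, hαk₁⟩ with ha₁
  set cα := contractPerm α k₀ with hcα
  set E : Fin d → (ι' → Fin d) → ι → Fin d :=
    fun v j => (Equiv.funSplitAt k₁ (Fin d)).symm (v, j) with hE
  have hEapp : ∀ v j k, E v j k = if h : k = k₁ then v else j ⟨k, h⟩ := by
    intro v j k
    simp [hE, Equiv.funSplitAt, Equiv.piSplitAt]
  have hE₁ : ∀ v j, E v j k₁ = v := fun v j => by simp [hEapp]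
  have hEne : ∀ v j (k : ι) (hk : k ≠ k₁), E v j k = j ⟨k, hk⟩ := fun v j k hk => by
    simp [hEapp, hk]
  have hcα_b₀ : cα b₀ = a₁ := by
    apply Subtype.ext
    simp [hcα, contractPerm, Equiv.Perm.subtypePerm_apply, hb₀, ha₁, Equiv.swap_apply_left, hk₁]
  have hcα_other : ∀ (k : ι'), k ≠ b₀ → (cα k : ι) = α (k : ι) := by
    intro k hk
    have h1 : (k : ι) ≠ k₀ := fun hc => hk (Subtype.ext hc)
    have h2 : (k : ι) ≠ k₁ := k.2
    simp [hcα, contractPerm, Equiv.Perm.subtypePerm_apply,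
      Equiv.swap_apply_of_ne_of_ne h1 (show (k : ι) ≠ α k₀ from h2)]
  have hαval : ∀ (k : ι'), k ≠ b₀ → α (k : ι) ≠ k₁ := by
    intro k hk hc
    exact hk (Subtype.ext (α.injective (hc.trans hk₁)))
  calc trP ι α M
      = ∑ p : Fin d × (ι' → Fin d), ∏ k : ι,
          M k (E p.1 p.2 k) (E p.1 p.2 (α k)) := by
        rw [trP, ← Equiv.sum_comp (Equiv.funSplitAt k₁ (Fin d)).symm]
    _ = ∑ v : Fin d, ∑ j : ι' → Fin d, ∏ k : ι,
          M k (E v j k) (E v j (α k)) := by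
        rw [Fintype.sum_prod_type]
    _ = ∑ v : Fin d, ∑ j : ι' → Fin d,
          (M k₁ v (j a₁) * (M k₀ (j b₀) v *
            ∏ k ∈ Finset.univ.erase b₀, M (k : ι) (j k) (j (cα k)))) := by
        refine Finset.sum_congr rfl fun v _ => Finset.sum_congr rfl fun j _ => ?_
        rw [← Finset.mul_prod_erase Finset.univ _ (Finset.mem_univ k₁)]
        have hsub : (∏ k ∈ Finset.univ.erase k₁, M k (E v j k) (E v j (α k)))
            = ∏ k : ι', M (k : ι) (E v j k) (E v j (α (k : ι))) := by
          rw [Finset.prod_subtype (p := fun k => k ≠ k₁) (Finset.univ.erase k₁)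
            (fun k => by simp) (fun k => M k (E v j k) (E v j (α k)))]
        rw [hsub, ← Finset.mul_prod_erase Finset.univ _ (Finset.mem_univ b₀)]
        congr 1
        · rw [hE₁, hEne v j (α k₁) hαk₁]
        congr 1
        · show M k₀ (E v j k₀) (E v j (α k₀)) = M k₀ (j b₀) v
          rw [hEne v j k₀ hk01, ← hk₁, hE₁]
        · refine Finset.prod_congr rfl fun k hk => ?_
          have hk' : k ≠ b₀ := (Finset.mem_erase.mp hk).1
          rw [hEne v j (k : ι) k.2, hEne v j (α (k : ι)) (hαval k hk')]
          congr 1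
          apply congrArg
          exact Subtype.ext (hcα_other k hk').symm
    _ = ∑ j : ι' → Fin d, ((M k₀ * M k₁) (j b₀) (j a₁) *
            ∏ k ∈ Finset.univ.erase b₀, M (k : ι) (j k) (j (cα k))) := by
        rw [Finset.sum_comm]
        refine Finset.sum_congr rfl fun j _ => ?_
        rw [Matrix.mul_apply, Finset.sum_mul]
        refine Finset.sum_congr rfl fun v _ => ?_
        ring
    _ = trP ι' cα (fun k => if (k : ι) = k₀ then M k₀ * M k₁ else M (k : ι)) := by
        rw [trP]
        refine Finset.sum_congr rfl fun j _ => ?_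
        rw [← Finset.mul_prod_erase Finset.univ _ (Finset.mem_univ b₀), hcα_b₀]
        congr 1
        · simp [hb₀]
        · refine Finset.prod_congr rfl fun k hk => ?_
          have hk0 : (k : ι) ≠ k₀ := fun hc => (Finset.mem_erase.mp hk).1 (Subtype.ext hc)
          simp [hk0]
    _ = trP ι' cα (fun k => if (k : ι) = k₀ then M k₀ * M (α k₀) else M (k : ι)) := rfl

lemma trP_bound {d : ℕ} : ∀ (n : ℕ) (ι : Type) (_ : Fintype ι) (_ : DecidableEq ι),
    Fintype.card ι = n → ∀ (α : Equiv.Perm ι) (M : ι → Matrix (Fin d) (Fin d) ℂ) (c : ι → ℝ),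
    (∀ k, ‖(M k).trace‖ ≤ c k) → (∀ k, ‖M k‖ ≤ c k) →
    ‖trP ι α M‖ ≤ ∏ k, c k := by
  intro n
  induction n using Nat.strong_induction_on with
  | _ n ih =>
    intro ι _ _ hcard α M c h1 h2
    have hc0 : ∀ k, 0 ≤ c k := fun k => le_trans (norm_nonneg _) (h2 k)
    by_cases hα : α = 1
    · subst hα
      rw [trP_one]
      calc ‖∏ k, (M k).trace‖ = ∏ k, ‖(M k).trace‖ := by
            rw [norm_prod]
        _ ≤ ∏ k, c k := Finset.prod_le_prod (fun k _ => norm_nonneg _)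
            (fun k _ => h1 k)
    · obtain ⟨k₀, hk₀⟩ : ∃ k, α k ≠ k := by
        by_contra hc
        push_neg at hc
        exact hα (Equiv.ext fun k => hc k)
      set k₁ := α k₀ with hk₁
      have hcard' : Fintype.card {k : ι // k ≠ k₁} = n - 1 := by
        have : Fintype.card {k : ι // ¬ (k = k₁)} = Fintype.card ι - 1 := by
          rw [Fintype.card_subtype_compl, Fintype.card_subtype_eq]
        rw [← hcard]; exact this
      have hpos : 0 < n := by
        rw [← hcard]
        exact Fintype.card_pos_iff.mpr ⟨k₀⟩
      have hlt : n - 1 < n := Nat.sub_lt hpos one_pos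
      rw [trP_contract α M k₀ hk₀]
      set c' : {k : ι // k ≠ k₁} → ℝ := fun k => if (k : ι) = k₀ then c k₀ * c k₁ else c k with hc'
      have step := ih (n-1) hlt {k : ι // k ≠ k₁} (inferInstance) (inferInstance) hcard' (contractPerm α k₀)
        (fun k => if (k : ι) = k₀ then M k₀ * M k₁ else M (k : ι)) c' ?_ ?_
      · refine step.trans_eq ?_
        have hk01 : k₀ ≠ k₁ := Ne.symm hk₀
        have e1 : ∏ k, c k = c k₁ * ∏ k : {k : ι // k ≠ k₁}, c (k : ι) := by
          rw [← Finset.mul_prod_erase Finset.univ c (Finset.mem_univ k₁)]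
          congr 1
          rw [Finset.prod_subtype (p := fun k => k ≠ k₁) (Finset.univ.erase k₁)
            (fun k => by simp) (fun k => c k)]
        have e2 : ∏ k : {k : ι // k ≠ k₁}, c' k
            = (c k₀ * c k₁) * ∏ k ∈ Finset.univ.erase (⟨k₀, hk01⟩ : {k : ι // k ≠ k₁}), c (k : ι) := by
          rw [← Finset.mul_prod_erase Finset.univ c' (Finset.mem_univ ⟨k₀, hk01⟩)]
          congr 1
          · simp [hc']
          · refine Finset.prod_congr rfl fun k hk => ?_
            have : (k : ι) ≠ k₀ := fun hc => (Finset.mem_erase.mp hk).1 (Subtype.ext hc)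
            simp [hc', this]
        have e3 : ∏ k : {k : ι // k ≠ k₁}, c (k : ι)
            = c k₀ * ∏ k ∈ Finset.univ.erase (⟨k₀, hk01⟩ : {k : ι // k ≠ k₁}), c (k : ι) := by
          rw [← Finset.mul_prod_erase Finset.univ _ (Finset.mem_univ ⟨k₀, hk01⟩)]
        rw [e2, e1, e3]
        ring
      · intro k
        by_cases hk : (k : ι) = k₀
        · simp only [hc', hk, if_pos]
          calc ‖(M k₀ * M k₁).trace‖ ≤ ‖M k₀‖ * ‖M k₁‖ := abs_trace_mul_le _ _
            _ ≤ c k₀ * c k₁ := mul_le_mul (h2 k₀) (h2 k₁) (norm_nonneg _) (hc0 k₀)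
        · simp only [hc', hk, if_neg, if_false]
          exact h1 (k : ι)
      · intro k
        by_cases hk : (k : ι) = k₀
        · simp only [hc', hk, if_pos]
          calc ‖M k₀ * M k₁‖ ≤ ‖M k₀‖ * ‖M k₁‖ := Matrix.frobenius_norm_mul _ _
            _ ≤ c k₀ * c k₁ := mul_le_mul (h2 k₀) (h2 k₁) (norm_nonneg _) (hc0 k₀)
        · simp only [hc', hk, if_neg, if_false]
          exact h2 (k : ι)

set_option maxHeartbeats 1000000 in
/-- Trace bound for permuted products: for all `α ∈ S₈`,
`|Tr_α(A,Aᴴ,A,Aᴴ,B,Bᴴ,B,Bᴴ)|^{1/2}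
  ≤ max{|Tr A|⁴, Tr(AAᴴ)²}^{1/2} · max{|Tr B|⁴, Tr(BBᴴ)²}^{1/2}`,
together with the representative special case
`Tr(ABABAᴴBᴴAᴴBᴴ) ≤ Tr(BBᴴ)²·Tr(AAᴴ)²`. -/
theorem stmt19 {d : ℕ} (A B : Matrix (Fin d) (Fin d) ℂ) :
    (∀ α : Equiv.Perm (Fin 8),
      Real.sqrt ‖trPerm α ![A, Aᴴ, A, Aᴴ, B, Bᴴ, B, Bᴴ]‖
        ≤ Real.sqrt (max (‖A.trace‖ ^ 4) (((A * Aᴴ).trace).re ^ 2)) *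
          Real.sqrt (max (‖B.trace‖ ^ 4) (((B * Bᴴ).trace).re ^ 2)))
    ∧ ((A * B * A * B * Aᴴ * Bᴴ * Aᴴ * Bᴴ).trace).re
        ≤ ((B * Bᴴ).trace).re ^ 2 * ((A * Aᴴ).trace).re ^ 2 := by
  have habsA : ‖Aᴴ.trace‖ = ‖A.trace‖ := by
    rw [Matrix.trace_conjTranspose]
    exact norm_star _
  have habsB : ‖Bᴴ.trace‖ = ‖B.trace‖ := by
    rw [Matrix.trace_conjTranspose]
    exact norm_star _
  set a : ℝ := max ‖A.trace‖ ‖A‖ with ha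
  set b : ℝ := max ‖B.trace‖ ‖B‖ with hb
  have ha0 : 0 ≤ a := le_trans (norm_nonneg A) (le_max_right _ _)
  have hb0 : 0 ≤ b := le_trans (norm_nonneg B) (le_max_right _ _)
  constructor
  · intro α
    have key : ‖trPerm α ![A, Aᴴ, A, Aᴴ, B, Bᴴ, B, Bᴴ]‖ ≤ a^4 * b^4 := by
      have := trP_bound 8 (Fin 8) inferInstance inferInstance rfl α
        ![A, Aᴴ, A, Aᴴ, B, Bᴴ, B, Bᴴ] ![a, a, a, a, b, b, b, b] ?_ ?_
      · refine this.trans_eq ?_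
        have h5 : (![a,a,a,a,b,b,b,b] : Fin 8 → ℝ) 5 = b := rfl
        have h6 : (![a,a,a,a,b,b,b,b] : Fin 8 → ℝ) 6 = b := rfl
        have h7 : (![a,a,a,a,b,b,b,b] : Fin 8 → ℝ) 7 = b := rfl
        rw [Fin.prod_univ_eight]
        simp only [Matrix.cons_val_zero, Matrix.cons_val_one, Matrix.head_cons,
          Matrix.cons_val_two, Matrix.tail_cons, Matrix.cons_val_three,
          Matrix.cons_val_four, h5, h6, h7]
        ring
      · intro k
        fin_cases k
        · exact le_max_left _ _
        · exact habsA.le.trans (le_max_left _ _)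
        · exact le_max_left _ _
        · exact habsA.le.trans (le_max_left _ _)
        · exact le_max_left _ _
        · exact habsB.le.trans (le_max_left _ _)
        · exact le_max_left _ _
        · exact habsB.le.trans (le_max_left _ _)
      · intro k
        fin_cases k
        · exact le_max_right _ _
        · exact (Matrix.frobenius_norm_conjTranspose A).le.trans (le_max_right _ _)
        · exact le_max_right _ _
        · exact (Matrix.frobenius_norm_conjTranspose A).le.trans (le_max_right _ _)
        · exact le_max_right _ _
        · exact (Matrix.frobenius_norm_conjTranspose B).le.trans (le_max_right _ _)
        · exact le_max_right _ _
        · exact (Matrix.frobenius_norm_conjTranspose B).le.trans (le_max_right _ _)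
    have max_pow4 : ∀ x y : ℝ, 0 ≤ x → 0 ≤ y → max x y ^ 4 = max (x^4) (y^4) := by
      intro x y hx hy
      rcases le_total x y with hxy | hxy
      · rw [max_eq_right hxy, max_eq_right (pow_le_pow_left₀ hx hxy 4)]
      · rw [max_eq_left hxy, max_eq_left (pow_le_pow_left₀ hy hxy 4)]
    have hmaxA : max (‖A.trace‖ ^ 4) (((A * Aᴴ).trace).re ^ 2) = a ^ 4 := by
      rw [trace_mul_conjTranspose_re, ← pow_mul, ha,
        max_pow4 _ _ (norm_nonneg _) (norm_nonneg _)]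
    have hmaxB : max (‖B.trace‖ ^ 4) (((B * Bᴴ).trace).re ^ 2) = b ^ 4 := by
      rw [trace_mul_conjTranspose_re, ← pow_mul, hb,
        max_pow4 _ _ (norm_nonneg _) (norm_nonneg _)]
    rw [hmaxA, hmaxB, ← Real.sqrt_mul (by positivity)]
    exact Real.sqrt_le_sqrt key
  · have h1 : ((A * B * A * B * Aᴴ * Bᴴ * Aᴴ * Bᴴ).trace).re
        ≤ ‖(A * B * A * B * Aᴴ * Bᴴ * Aᴴ * Bᴴ).trace‖ := Complex.re_le_norm _
    have h2 : (A * B * A * B * Aᴴ * Bᴴ * Aᴴ * Bᴴ)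
        = (A * B * A * B) * (Aᴴ * Bᴴ * Aᴴ * Bᴴ) := by
      simp only [mul_assoc]
    have h3 : ‖((A * B * A * B) * (Aᴴ * Bᴴ * Aᴴ * Bᴴ)).trace‖
        ≤ ‖A * B * A * B‖ * ‖Aᴴ * Bᴴ * Aᴴ * Bᴴ‖ := abs_trace_mul_le _ _
    have hn1 : ‖A * B * A * B‖ ≤ ‖A‖ * ‖B‖ * (‖A‖ * ‖B‖) := by
      calc ‖A * B * A * B‖ ≤ ‖A * B * A‖ * ‖B‖ := Matrix.frobenius_norm_mul _ _
        _ ≤ (‖A * B‖ * ‖A‖) * ‖B‖ := by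
            gcongr; exact Matrix.frobenius_norm_mul _ _
        _ ≤ ((‖A‖ * ‖B‖) * ‖A‖) * ‖B‖ := by
            gcongr <;> first | exact Matrix.frobenius_norm_mul _ _ | positivity
        _ = ‖A‖ * ‖B‖ * (‖A‖ * ‖B‖) := by ring
    have hn2 : ‖Aᴴ * Bᴴ * Aᴴ * Bᴴ‖ ≤ ‖A‖ * ‖B‖ * (‖A‖ * ‖B‖) := by
      calc ‖Aᴴ * Bᴴ * Aᴴ * Bᴴ‖ ≤ ‖Aᴴ * Bᴴ * Aᴴ‖ * ‖Bᴴ‖ := Matrix.frobenius_norm_mul _ _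
        _ ≤ (‖Aᴴ * Bᴴ‖ * ‖Aᴴ‖) * ‖Bᴴ‖ := by
            gcongr; exact Matrix.frobenius_norm_mul _ _
        _ ≤ ((‖Aᴴ‖ * ‖Bᴴ‖) * ‖Aᴴ‖) * ‖Bᴴ‖ := by
            gcongr <;> first | exact Matrix.frobenius_norm_mul _ _ | positivity
        _ = ‖A‖ * ‖B‖ * (‖A‖ * ‖B‖) := by
            rw [Matrix.frobenius_norm_conjTranspose, Matrix.frobenius_norm_conjTranspose]
            ring
    rw [trace_mul_conjTranspose_re, trace_mul_conjTranspose_re]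
    calc ((A * B * A * B * Aᴴ * Bᴴ * Aᴴ * Bᴴ).trace).re
        ≤ ‖((A * B * A * B) * (Aᴴ * Bᴴ * Aᴴ * Bᴴ)).trace‖ := by rw [← h2]; exact h1
      _ ≤ ‖A * B * A * B‖ * ‖Aᴴ * Bᴴ * Aᴴ * Bᴴ‖ := h3
      _ ≤ (‖A‖ * ‖B‖ * (‖A‖ * ‖B‖)) * (‖A‖ * ‖B‖ * (‖A‖ * ‖B‖)) := by
          exact mul_le_mul hn1 hn2 (norm_nonneg _) (by positivity)
      _ = (‖B‖ ^ 2) ^ 2 * (‖A‖ ^ 2) ^ 2 := by ring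
end
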